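/- arXiv:2302.09888 — 4 statements merged into one kernel-verified Lean document; each statement's English description precedes it below -/
import Mathlib

section
/- For every real load A > 0 and every natural number n, the Erlang B blocking probability is strictly decreasing in the number of servers: B(n+1, A) < B(n, A). -/
/-!
Cross-multiplying, `B(n+1, A) < B(n, A)` becomes `A · S_n < (n+1) · S_{n+1}` for the truncated
exponential `S_n = ∑_{i ≤ n} A^i / i!`. Termwise `A · A^i / i! = (i+1) · A^(i+1) / (i+1)!` with
`i + 1 ≤ n + 1`, so `A · S_n ≤ (n+1) (S_{n+1} - 1)`.
-/

/-- The Erlang B blocking probability with offered load `A` and `n` servers: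
`B(n, A) = (A^n / n!) / (∑_{i=0}^{n} A^i / i!)`. -/
noncomputable def ErlangB (A : ℝ) (n : ℕ) : ℝ :=
  (A ^ n / n.factorial) / (∑ i ∈ Finset.range (n + 1), A ^ i / i.factorial)

open Finset Nat

section TruncatedExp

variable {K : Type*} [Field K] [LinearOrder K] [IsStrictOrderedRing K]

def truncExp (A : K) (n : ℕ) : K :=
  ∑ i ∈ range (n + 1), A ^ i / i !

theorem truncExp_succ (A : K) (n : ℕ) :
    truncExp A (n + 1) = ∑ i ∈ range (n + 1), A ^ (i + 1) / (i + 1)! + 1 := by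
  simp [truncExp, sum_range_succ' _ (n + 1)]

theorem truncExp_pos {A : K} (hA : 0 ≤ A) (n : ℕ) : 0 < truncExp A n := by
  cases n with
  | zero => simp [truncExp]
  | succ n =>
    rw [truncExp_succ]
    have : 0 ≤ ∑ i ∈ range (n + 1), A ^ (i + 1) / (i + 1)! :=
      sum_nonneg fun i _ => by positivity
    linarith

theorem mul_pow_div_factorial (A : K) (i : ℕ) :
    A * (A ^ i / i !) = (i + 1) * (A ^ (i + 1) / (i + 1)!) := by
  rw [factorial_succ, cast_mul, pow_succ]
  field_simp
  push_cast
  ring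

theorem mul_truncExp_lt {A : K} (hA : 0 ≤ A) (n : ℕ) :
    A * truncExp A n < (n + 1) * truncExp A (n + 1) := by
  have hterm : ∀ i ∈ range (n + 1),
      A * (A ^ i / i !) ≤ (n + 1) * (A ^ (i + 1) / (i + 1)!) := fun i hi => by
    rw [mul_pow_div_factorial]
    gcongr
    exact_mod_cast Nat.lt_succ_iff.mp (mem_range.mp hi)
  calc A * truncExp A n ≤ (n + 1) * ∑ i ∈ range (n + 1), A ^ (i + 1) / (i + 1)! := by
        rw [truncExp, mul_sum, mul_sum]
        exact sum_le_sum hterm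
    _ < (n + 1) * truncExp A (n + 1) := by
        rw [truncExp_succ]
        gcongr
        linarith

end TruncatedExp

theorem erlangB_eq_div_truncExp (A : ℝ) (n : ℕ) : ErlangB A n = A ^ n / n ! / truncExp A n :=
  rfl

/-- For every load `A > 0` and every `n`, the Erlang B blocking probability is
strictly decreasing in the number of servers: `B(n+1, A) < B(n, A)`. -/
theorem erlangB_strictAnti (A : ℝ) (hA : 0 < A) (n : ℕ) :
    ErlangB A (n + 1) < ErlangB A n := by
  rw [erlangB_eq_div_truncExp, erlangB_eq_div_truncExp,
    div_lt_div_iff₀ (truncExp_pos hA.le _) (truncExp_pos hA.le _)]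
  calc A ^ (n + 1) / (n + 1)! * truncExp A n = A ^ n / n ! * (A * truncExp A n / (n + 1)) := by
        rw [factorial_succ, cast_mul, pow_succ]
        field_simp
        push_cast
        ring
    _ < A ^ n / n ! * truncExp A (n + 1) := by
        gcongr
        rw [div_lt_iff₀' (by positivity)]
        exact mul_truncExp_lt hA.le n
end

section
/- For every real load A > 0 and every natural number n, the Erlang B blocking probability is discretely convex in the number of servers: B(n, A) + B(n+2, A) ≥ 2 · B(n+1, A). Equivalently, the complementary probability n ↦ 1 − B(n, A) has nonincreasing increments: (1 − B(n+2, A)) − (1 − B(n+1, A)) ≤ (1 − B(n+1, A)) − (1 − B(n, A)). -/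
section

variable {A : ℝ}

theorem sum_pow_div_factorial_pos (hA : 0 ≤ A) (n : ℕ) :
    0 < ∑ i ∈ Finset.range (n + 1), A ^ i / i.factorial :=
  Finset.sum_pos' (fun i _ => by positivity) ⟨0, by simp⟩

theorem erlangB_pos (hA : 0 < A) (n : ℕ) : 0 < ErlangB A n := by
  have := sum_pow_div_factorial_pos hA.le n
  unfold ErlangB
  positivity

theorem erlangB_succ_mul (hA : 0 ≤ A) (n : ℕ) :
    ErlangB A (n + 1) * (n + 1 + A * ErlangB A n) = A * ErlangB A n := by
  have h₀ := sum_pow_div_factorial_pos hA n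
  have h₁ := sum_pow_div_factorial_pos hA (n + 1)
  unfold ErlangB
  rw [Finset.sum_range_succ _ (n + 1)] at h₁ ⊢
  push_cast [Nat.factorial_succ, pow_succ]
  field_simp

noncomputable def erlangSlack (A : ℝ) (n : ℕ) : ℝ :=
  n + 1 - A * (1 - ErlangB A n)

theorem erlangSlack_zero : erlangSlack A 0 = 1 := by
  simp [erlangSlack, ErlangB]

theorem erlangSlack_succ_mul (hA : 0 ≤ A) (n : ℕ) :
    erlangSlack A (n + 1) * (erlangSlack A n + A) = (n + 2) * erlangSlack A n + A := by
  unfold erlangSlack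
  push_cast
  linear_combination A * erlangB_succ_mul hA n

theorem erlangSlack_pos (hA : 0 ≤ A) (n : ℕ) : 0 < erlangSlack A n := by
  induction n with
  | zero => simp [erlangSlack_zero]
  | succ n ih =>
    have h := erlangSlack_succ_mul hA n
    have : 0 < erlangSlack A (n + 1) * (erlangSlack A n + A) := by rw [h]; positivity
    exact pos_of_mul_pos_left this (by positivity)

theorem mul_erlangB_sub_succ (hA : 0 ≤ A) (n : ℕ) :
    A * (ErlangB A n - ErlangB A (n + 1)) = ErlangB A (n + 1) * erlangSlack A n := by
  unfold erlangSlack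
  linear_combination -erlangB_succ_mul hA n

theorem mul_erlangSlack_succ_le (hA : 0 ≤ A) (n : ℕ) :
    A * erlangSlack A (n + 1) ≤ erlangSlack A n * (erlangSlack A (n + 1) + A) := by
  induction n with
  | zero =>
    have h := erlangSlack_succ_mul hA 0
    rw [erlangSlack_zero] at h ⊢
    have key : (1 + A) * (erlangSlack A 1 + A - A * erlangSlack A 1) = 2 := by
      push_cast at h
      linear_combination (1 - A) * h
    nlinarith
  | succ n ih =>
    have hxy := erlangSlack_succ_mul hA n
    have hyz := erlangSlack_succ_mul hA (n + 1)
    have hx := erlangSlack_pos hA n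
    have hy := erlangSlack_pos hA (n + 1)
    set x := erlangSlack A n
    set y := erlangSlack A (n + 1)
    set z := erlangSlack A (n + 1 + 1)
    push_cast at hyz
    have hy_bound : 0 ≤ y * (2 * y + A) - ((n + 3) * y + A) := by
      have key : (x + A) * (y * (2 * y + A) - ((n + 3) * y + A)) =
          (n + 1) * (x * (y + A) - A * y) := by
        linear_combination (A + 2 * y) * hxy
      refine nonneg_of_mul_nonneg_right ?_ (by positivity : 0 < x + A)
      rw [key]
      exact mul_nonneg (by positivity) (by linarith)
    have hz_key : (A + 2 * y) * ((y + A) * (y * (z + A) - A * z)) =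
        A * (A + y) * (y * (2 * y + A) - ((n + 3) * y + A)) + 2 * y ^ 2 * (A + (n + 3) * y) := by
      linear_combination (A + 2 * y) * (y - A) * hyz
    have hz : 0 ≤ (y + A) * (y * (z + A) - A * z) := by
      refine nonneg_of_mul_nonneg_right ?_ (by positivity : 0 < A + 2 * y)
      rw [hz_key]
      positivity
    linarith [nonneg_of_mul_nonneg_right hz (by positivity)]

theorem erlangB_sub_succ_le (hA : 0 < A) (n : ℕ) :
    ErlangB A (n + 1) - ErlangB A (n + 2) ≤ ErlangB A n - ErlangB A (n + 1) := by
  have hrec : ErlangB A (n + 2) * (erlangSlack A (n + 1) + A) = A * ErlangB A (n + 1) := by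
    have h := erlangB_succ_mul hA.le (n + 1)
    unfold erlangSlack
    push_cast at h ⊢
    linear_combination h
  have hd₀ := mul_erlangB_sub_succ hA.le n
  have hd₁ := mul_erlangB_sub_succ hA.le (n + 1)
  have hS : 0 < erlangSlack A (n + 1) + A := by linarith [erlangSlack_pos hA.le (n + 1)]
  refine le_of_mul_le_mul_left ?_ (mul_pos hA hS)
  calc A * (erlangSlack A (n + 1) + A) * (ErlangB A (n + 1) - ErlangB A (n + 2))
      = ErlangB A (n + 1) * (A * erlangSlack A (n + 1)) := by
        linear_combination (erlangSlack A (n + 1) + A) * hd₁ + erlangSlack A (n + 1) * hrec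
    _ ≤ ErlangB A (n + 1) * (erlangSlack A n * (erlangSlack A (n + 1) + A)) :=
        mul_le_mul_of_nonneg_left (mul_erlangSlack_succ_le hA.le n) (erlangB_pos hA _).le
    _ = A * (erlangSlack A (n + 1) + A) * (ErlangB A n - ErlangB A (n + 1)) := by
        linear_combination -(erlangSlack A (n + 1) + A) * hd₀

end

/-- For every load `A > 0` and every `n`, the Erlang B blocking probability is discretely
convex in the number of servers: `B(n, A) + B(n+2, A) ≥ 2 · B(n+1, A)`; equivalently,
`n ↦ 1 − B(n, A)` has nonincreasing increments. -/
theorem erlangB_discrete_convex (A : ℝ) (hA : 0 < A) (n : ℕ) :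
    ErlangB A n + ErlangB A (n + 2) ≥ 2 * ErlangB A (n + 1) ∧
    (1 - ErlangB A (n + 2)) - (1 - ErlangB A (n + 1)) ≤
      (1 - ErlangB A (n + 1)) - (1 - ErlangB A n) := by
  have h := erlangB_sub_succ_le hA n
  exact ⟨by linarith, by linarith⟩
end

section
/- (Theorem 1, monotonicity) The objective function f(S) = ∑_{p=1}^P w_p · (1 − B(|S ∩ V_p|, A_p)) is monotone: if S ⊆ T ⊆ V then f(S) ≤ f(T). -/
/-!
Dividing the denominator of `B(n, A)` by its last term `A^n / n!` gives
`1 / B(n, A) = ∑_{k ≤ n} n (n - 1) ⋯ (n - k + 1) / A^k`. For `A > 0` both the terms and the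
number of terms of this sum grow with `n`, so `B(·, A)` is antitone, and each summand of the
objective grows with `|S ∩ V_p|`.
-/

open Finset

theorem pow_div_factorial_mul_descFactorial_div_pow {A : ℝ} (hA : A ≠ 0) {n k : ℕ} (hk : k ≤ n) :
    A ^ n / n.factorial * (n.descFactorial k / A ^ k) = A ^ (n - k) / (n - k).factorial := by
  have hfac : ((n - k).factorial * n.descFactorial k : ℝ) = n.factorial := by
    exact_mod_cast Nat.factorial_mul_descFactorial hk
  rw [← hfac, ← pow_sub_mul_pow A hk]
  have : (n.descFactorial k : ℝ) ≠ 0 := by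
    exact_mod_cast (Nat.descFactorial_pos.mpr hk).ne'
  field_simp

namespace ErlangB

variable {A : ℝ}

theorem inv_eq_sum_descFactorial_div_pow (hA : A ≠ 0) (n : ℕ) :
    (ErlangB A n)⁻¹ = ∑ k ∈ range (n + 1), n.descFactorial k / A ^ k := by
  have hreflect : ∑ i ∈ range (n + 1), A ^ i / i.factorial
      = A ^ n / n.factorial * ∑ k ∈ range (n + 1), n.descFactorial k / A ^ k := by
    rw [mul_sum, ← sum_range_reflect]
    refine sum_congr rfl fun k hk => ?_
    rw [pow_div_factorial_mul_descFactorial_div_pow hA (Nat.lt_succ_iff.mp (mem_range.mp hk))]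
    simp
  rw [ErlangB, inv_div, hreflect, mul_div_cancel_left₀]
  positivity

theorem inv_monotone (hA : 0 < A) : Monotone fun n => (ErlangB A n)⁻¹ := by
  refine monotone_nat_of_le_succ fun n => ?_
  simp only [inv_eq_sum_descFactorial_div_pow hA.ne']
  rw [sum_range_succ _ (n + 1)]
  refine le_add_of_le_of_nonneg (sum_le_sum fun k _ => ?_) (by positivity)
  gcongr
  exact n.le_succ

theorem pos (hA : 0 < A) (n : ℕ) : 0 < ErlangB A n := by
  unfold ErlangB
  positivity

theorem antitone (hA : 0 < A) : Antitone (ErlangB A) := fun m n hmn =>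
  (inv_le_inv₀ (pos hA m) (pos hA n)).mp (inv_monotone hA hmn)

end ErlangB

theorem objective_monotone_general {α : Type*} [DecidableEq α] (P : ℕ)
    (V : Fin P → Finset α)
    (A : Fin P → ℝ) (hA : ∀ p, 0 < A p)
    (w : Fin P → ℝ) (hw : ∀ p, 0 ≤ w p)
    (S T : Finset α) (hST : S ⊆ T) :
    ∑ p, w p * (1 - ErlangB (A p) (S ∩ V p).card) ≤
      ∑ p, w p * (1 - ErlangB (A p) (T ∩ V p).card) := by
  gcongr with p
  · exact hw p
  · exact ErlangB.antitone (hA p) (card_le_card (inter_subset_inter_right hST))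

/-- (Theorem 1, monotonicity) With pairwise disjoint candidate-session sets `V p` whose
union is `Vall`, offered loads `A p > 0` and weights `w p ≥ 0`, the objective
`f(S) = ∑_p w p · (1 − B(|S ∩ V p|, A p))` is monotone: `S ⊆ T ⊆ Vall` implies
`f(S) ≤ f(T)`. -/
theorem objective_monotone {α : Type*} [DecidableEq α] (P : ℕ)
    (V : Fin P → Finset α) (hdisj : ∀ p q : Fin P, p ≠ q → Disjoint (V p) (V q))
    (Vall : Finset α) (hV : Vall = Finset.univ.biUnion V)
    (A : Fin P → ℝ) (hA : ∀ p, 0 < A p)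
    (w : Fin P → ℝ) (hw : ∀ p, 0 ≤ w p)
    (S T : Finset α) (hST : S ⊆ T) (hT : T ⊆ Vall) :
    ∑ p, w p * (1 - ErlangB (A p) (S ∩ V p).card) ≤
      ∑ p, w p * (1 - ErlangB (A p) (T ∩ V p).card) :=
  objective_monotone_general P V A hA w hw S T hST
end

section
/- (Theorem 1, submodularity) The objective function f(S) = ∑_{p=1}^P w_p · (1 − B(|S ∩ V_p|, A_p)) is submodular: for all S ⊆ T ⊆ V and all v ∈ V \ T, f(T ∪ {v}) − f(T) ≤ f(S ∪ {v}) − f(S). -/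
namespace ErlangB

noncomputable def expTerm (A : ℝ) (n : ℕ) : ℝ := A ^ n / n.factorial

noncomputable def truncExp (A : ℝ) (n : ℕ) : ℝ := ∑ i ∈ Finset.range (n + 1), expTerm A i

noncomputable def truncExpSum (A : ℝ) (n : ℕ) : ℝ := ∑ i ∈ Finset.range (n + 1), truncExp A i

noncomputable def slack (A : ℝ) (n : ℕ) : ℝ :=
  truncExpSum A n ^ 2 + A * expTerm A (n + 1) * truncExpSum A n
    + 2 * truncExp A (n + 1) * truncExpSum A n - (n + 1) * truncExp A (n + 1) ^ 2

variable {A : ℝ}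

theorem eq_expTerm_div_truncExp (A : ℝ) (n : ℕ) : ErlangB A n = expTerm A n / truncExp A n := rfl

theorem expTerm_pos (hA : 0 < A) (n : ℕ) : 0 < expTerm A n := by
  unfold expTerm
  positivity

theorem mul_expTerm (A : ℝ) (n : ℕ) : A * expTerm A n = (n + 1) * expTerm A (n + 1) := by
  unfold expTerm
  rw [Nat.factorial_succ]
  push_cast
  field_simp
  ring

theorem truncExp_succ (A : ℝ) (n : ℕ) : truncExp A (n + 1) = truncExp A n + expTerm A (n + 1) :=
  Finset.sum_range_succ _ _

theorem truncExp_pos (hA : 0 < A) (n : ℕ) : 0 < truncExp A n :=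
  Finset.sum_pos (fun i _ ↦ expTerm_pos hA i) Finset.nonempty_range_add_one

theorem truncExpSum_succ (A : ℝ) (n : ℕ) :
    truncExpSum A (n + 1) = truncExpSum A n + truncExp A (n + 1) :=
  Finset.sum_range_succ _ _

theorem truncExpSum_pos (hA : 0 < A) (n : ℕ) : 0 < truncExpSum A n :=
  Finset.sum_pos (fun i _ ↦ truncExp_pos hA i) Finset.nonempty_range_add_one

theorem mul_truncExp_add_truncExpSum (A : ℝ) (n : ℕ) :
    A * truncExp A n + truncExpSum A n = (n + 1) * truncExp A (n + 1) := by
  induction n with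
  | zero => simp [truncExp, truncExpSum, expTerm, Finset.sum_range_succ]; ring
  | succ n ih =>
    rw [truncExpSum_succ, truncExp_succ A (n + 1), mul_add, ← mul_expTerm]
    push_cast
    linear_combination ih + A * truncExp_succ A n

theorem truncExpSum_le (hA : 0 < A) (n : ℕ) : truncExpSum A n ≤ (n + 1) * truncExp A (n + 1) := by
  linarith [mul_truncExp_add_truncExpSum A n, mul_pos hA (truncExp_pos hA n)]

theorem slack_zero (A : ℝ) : slack A 0 = 2 := by
  simp [slack, truncExpSum, truncExp, expTerm, Finset.sum_range_succ]
  ring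

theorem slack_succ (A : ℝ) (n : ℕ) :
    (n + 2) * truncExpSum A n * truncExp A (n + 1) * slack A (n + 1)
      = slack A n ^ 2
        + ((n + 1) * truncExp A (n + 1) ^ 2 + (n - 2) * truncExp A (n + 1) * truncExpSum A n
          - 3 * truncExpSum A n ^ 2) * slack A n
        + 2 * truncExpSum A n * (truncExpSum A n + truncExp A (n + 1)) ^ 3 := by
  set M := truncExpSum A n
  set s := truncExp A (n + 1)
  set u := expTerm A (n + 2)
  have hAu : A * expTerm A (n + 1) = (n + 2) * u := by
    have h := mul_expTerm A (n + 1)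
    push_cast at h
    linear_combination h
  have hAs : A * s = (n + 1) * s + (n + 2) * u - M := by
    have h := mul_truncExp_add_truncExpSum A (n + 1)
    rw [truncExpSum_succ, truncExp_succ A (n + 1)] at h
    push_cast at h
    linear_combination h
  have hL : slack A n = M ^ 2 + (n + 2) * u * M + 2 * s * M - (n + 1) * s ^ 2 := by
    rw [slack, hAu]
  have hLsucc : slack A (n + 1)
      = (M + s) ^ 2 + A * u * (M + s) + 2 * (s + u) * (M + s) - (n + 2) * (s + u) ^ 2 := by
    rw [slack, truncExpSum_succ, truncExp_succ A (n + 1)]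
    push_cast
    ring
  rw [hL, hLsucc]
  linear_combination (n + 2) * M * u * (M + s) * hAs

theorem slack_nonneg (hA : 0 < A) (n : ℕ) : 0 ≤ slack A n := by
  induction n with
  | zero => rw [slack_zero]; norm_num
  | succ n ih =>
    set M := truncExpSum A n
    set s := truncExp A (n + 1)
    have hM : 0 < M := truncExpSum_pos hA n
    have hs : 0 < s := truncExp_pos hA (n + 1)
    have hMs : M ≤ (n + 1) * s := truncExpSum_le hA n
    have hcoeff : 0 ≤ (n + 1) * s ^ 2 + (n - 2) * s * M - 3 * M ^ 2 + 2 * M * (M + s) := by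
      nlinarith
    have hquad : 0 ≤ slack A n ^ 2 + ((n + 1) * s ^ 2 + (n - 2) * s * M - 3 * M ^ 2) * slack A n
        + 2 * M * (M + s) ^ 3 := by
      nlinarith [sq_nonneg (slack A n - M * (M + s)), mul_nonneg hcoeff ih,
        mul_pos (mul_pos hM (pow_pos (add_pos hM hs) 2)) (add_pos hM (add_pos hs hs))]
    refine nonneg_of_mul_nonneg_right ?_ (by positivity : 0 < (n + 2) * M * s)
    rw [slack_succ]
    exact hquad

theorem second_diff_eq (hA : 0 < A) (n : ℕ) :
    ErlangB A n + ErlangB A (n + 2) - 2 * ErlangB A (n + 1)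
      = expTerm A (n + 1) * slack A n
        / ((n + 2) * A * (truncExp A n * truncExp A (n + 1) * truncExp A (n + 2))) := by
  have e0 : expTerm A n = (n + 1) * expTerm A (n + 1) / A := by
    rw [eq_div_iff hA.ne']
    linear_combination mul_expTerm A n
  have e2 : expTerm A (n + 2) = A * expTerm A (n + 1) / (n + 2) := by
    rw [eq_div_iff (by positivity)]
    have h := mul_expTerm A (n + 1)
    push_cast at h
    linear_combination -h
  have eM : truncExpSum A n = (n + 1) * truncExp A (n + 1) - A * truncExp A n := by
    linear_combination mul_truncExp_add_truncExpSum A n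
  have hnum : (n + 2) * A * (expTerm A n * truncExp A (n + 1) * truncExp A (n + 2)
      + expTerm A (n + 2) * truncExp A n * truncExp A (n + 1)
      - 2 * expTerm A (n + 1) * truncExp A n * truncExp A (n + 2))
        = expTerm A (n + 1) * slack A n := by
    rw [slack, eM, truncExp_succ A (n + 1), e2, truncExp_succ A n, e0]
    field_simp
    ring
  have h0 := (truncExp_pos hA n).ne'
  have h1 := (truncExp_pos hA (n + 1)).ne'
  have h2 := (truncExp_pos hA (n + 2)).ne'
  rw [eq_expTerm_div_truncExp, eq_expTerm_div_truncExp, eq_expTerm_div_truncExp, ← hnum]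
  field_simp

theorem sub_succ_le_sub (hA : 0 < A) (n : ℕ) :
    ErlangB A (n + 1) - ErlangB A (n + 2) ≤ ErlangB A n - ErlangB A (n + 1) := by
  have h : 0 ≤ ErlangB A n + ErlangB A (n + 2) - 2 * ErlangB A (n + 1) := by
    rw [second_diff_eq hA]
    have := expTerm_pos hA (n + 1)
    have := slack_nonneg hA n
    have := truncExp_pos hA n
    have := truncExp_pos hA (n + 1)
    have := truncExp_pos hA (n + 2)
    positivity
  linarith

theorem antitone_sub_succ (hA : 0 < A) : Antitone fun n ↦ ErlangB A n - ErlangB A (n + 1) :=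
  antitone_nat_of_succ_le (sub_succ_le_sub hA)

end ErlangB

open Function in
theorem sum_card_insert_inter_sub {ι α M : Type*} [Fintype ι] [DecidableEq α] [AddCommGroup M]
    (g : ι → ℕ → M) {V : ι → Finset α} (hV : Pairwise (Disjoint on V)) {S : Finset α} {v : α}
    {p : ι} (hvp : v ∈ V p) (hvS : v ∉ S) :
    ∑ q, g q (insert v S ∩ V q).card - ∑ q, g q (S ∩ V q).card
      = g p ((S ∩ V p).card + 1) - g p (S ∩ V p).card := by
  rw [← Finset.sum_sub_distrib, Finset.sum_eq_single p]
  · rw [Finset.insert_inter_of_mem hvp,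
      Finset.card_insert_of_notMem fun h ↦ hvS (Finset.mem_inter.mp h).1]
  · intro q _ hqp
    rw [Finset.insert_inter_of_notMem (Finset.disjoint_left.mp (hV hqp.symm) hvp), sub_self]
  · simp

theorem objective_submodular_general {α : Type*} [DecidableEq α] (P : ℕ)
    (V : Fin P → Finset α) (hdisj : ∀ p q : Fin P, p ≠ q → Disjoint (V p) (V q))
    (Vall : Finset α) (hV : Vall = Finset.univ.biUnion V)
    (A : Fin P → ℝ) (hA : ∀ p, 0 < A p)
    (w : Fin P → ℝ) (hw : ∀ p, 0 ≤ w p)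
    (S T : Finset α) (hST : S ⊆ T)
    (v : α) (hv : v ∈ Vall) (hvT : v ∉ T) :
    (∑ p, w p * (1 - ErlangB (A p) ((insert v T ∩ V p).card))) -
        (∑ p, w p * (1 - ErlangB (A p) ((T ∩ V p).card))) ≤
      (∑ p, w p * (1 - ErlangB (A p) ((insert v S ∩ V p).card))) -
        (∑ p, w p * (1 - ErlangB (A p) ((S ∩ V p).card))) := by
  obtain ⟨p, -, hvp⟩ := Finset.mem_biUnion.mp (hV ▸ hv)
  let g q k := w q * (1 - ErlangB (A q) k)
  rw [sum_card_insert_inter_sub g hdisj hvp hvT,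
    sum_card_insert_inter_sub g hdisj hvp fun h ↦ hvT (hST h)]
  have hcard : (S ∩ V p).card ≤ (T ∩ V p).card :=
    Finset.card_le_card (Finset.inter_subset_inter_right hST)
  have := mul_le_mul_of_nonneg_left (ErlangB.antitone_sub_succ (hA p) hcard) (hw p)
  linarith

/-- (Theorem 1, submodularity) With pairwise disjoint candidate-session sets `V p` whose
union is `Vall`, offered loads `A p > 0` and weights `w p ≥ 0`, the objective
`f(S) = ∑_p w p · (1 − B(|S ∩ V p|, A p))` is submodular: for all `S ⊆ T ⊆ Vall` and
`v ∈ Vall \ T`, `f(T ∪ {v}) − f(T) ≤ f(S ∪ {v}) − f(S)`. -/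
theorem objective_submodular {α : Type*} [DecidableEq α] (P : ℕ)
    (V : Fin P → Finset α) (hdisj : ∀ p q : Fin P, p ≠ q → Disjoint (V p) (V q))
    (Vall : Finset α) (hV : Vall = Finset.univ.biUnion V)
    (A : Fin P → ℝ) (hA : ∀ p, 0 < A p)
    (w : Fin P → ℝ) (hw : ∀ p, 0 ≤ w p)
    (S T : Finset α) (hST : S ⊆ T) (hT : T ⊆ Vall)
    (v : α) (hv : v ∈ Vall) (hvT : v ∉ T) :
    (∑ p, w p * (1 - ErlangB (A p) ((insert v T ∩ V p).card))) -
        (∑ p, w p * (1 - ErlangB (A p) ((T ∩ V p).card))) ≤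
      (∑ p, w p * (1 - ErlangB (A p) ((insert v S ∩ V p).card))) -
        (∑ p, w p * (1 - ErlangB (A p) ((S ∩ V p).card))) :=
  objective_submodular_general P V hdisj Vall hV A hA w hw S T hST v hv hvT
end
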